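/- Let X be a Banach space and suppose there are sets S_n ⊂ S_X and an increasing sequence H_n ⊂ B_{X*} of relative boundaries, such that S_X = ⋃_{n=1}^∞ S_n and the numbers b_n = inf{ sup{h(x) : h ∈ H_n} : x ∈ S_n } are strictly positive and converge to 1. Then there exists a sequence (a_n)_{n=1}^∞ of reals with a_n > 1 and an equivalent norm |||·||| on X such that the set F = ⋃_{n=1}^∞ a_n((H_n \ H_{n-1}) ∪ −(H_n \ H_{n-1})) (with H_0 = ∅) is a boundary of (X, |||·|||). Moreover, if each H_n has property (*), then F has property (*) and |||·||| is polyhedral. -/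

import Mathlib

open NormedSpace Filter Set Topology Pointwise

noncomputable section

/-- `g` is a weak-* limit point of `F`: every weak-* neighbourhood of `g`
contains infinitely many points of `F`. -/
def IsWeakStarLimitPoint {X : Type*} [NormedAddCommGroup X] [NormedSpace ℝ X]
    (F : Set (StrongDual ℝ X)) (g : StrongDual ℝ X) : Prop :=
  ∀ U : Set (WeakDual ℝ X), IsOpen U → StrongDual.toWeakDual g ∈ U →
    {f : StrongDual ℝ X | f ∈ F ∧ StrongDual.toWeakDual f ∈ U}.Infinite

/-- Property (*) of a set of functionals. -/
def PropertyStar {X : Type*} [NormedAddCommGroup X] [NormedSpace ℝ X]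
    (F : Set (StrongDual ℝ X)) : Prop :=
  ∀ g : StrongDual ℝ X, IsWeakStarLimitPoint F g →
    ∀ x : X, sSup ((fun f : StrongDual ℝ X => f x) '' F) = 1 → g x < 1

/-- `F` is a relative boundary. -/
def IsRelativeBoundary {X : Type*} [NormedAddCommGroup X] [NormedSpace ℝ X]
    (F : Set (StrongDual ℝ X)) : Prop :=
  ∀ x : X, sSup ((fun f : StrongDual ℝ X => f x) '' F) = 1 → ∃ f ∈ F, f x = 1

/-- `B` is a boundary for the norm `ν`: every element of `B` lies in the
`ν`-dual unit ball, and every `ν`-unit vector attains the value 1 at some member of `B`. -/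
def IsBoundaryFor {X : Type*} [NormedAddCommGroup X] [NormedSpace ℝ X]
    (ν : X → ℝ) (B : Set (StrongDual ℝ X)) : Prop :=
  (∀ f ∈ B, ∀ x : X, f x ≤ ν x) ∧ ∀ x : X, ν x = 1 → ∃ f ∈ B, f x = 1

/-- `ν` is an equivalent norm on `X`. -/
def IsEquivNorm {X : Type*} [NormedAddCommGroup X] [NormedSpace ℝ X]
    (ν : Seminorm ℝ X) : Prop :=
  ∃ c C : ℝ, 0 < c ∧ ∀ x : X, c * ‖x‖ ≤ ν x ∧ ν x ≤ C * ‖x‖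

/-- A norm (given as a function) is polyhedral if the unit ball of every
finite-dimensional subspace is a polytope, i.e. the convex hull of finitely many points. -/
def IsPolyhedralNorm {X : Type*} [NormedAddCommGroup X] [NormedSpace ℝ X]
    (ν : X → ℝ) : Prop :=
  ∀ Y : Subspace ℝ X, FiniteDimensional ℝ Y →
    ∃ T : Set X, T.Finite ∧ {x : X | x ∈ Y ∧ ν x ≤ 1} = convexHull ℝ T

/-- `E ⊆ X*` is weak-* locally relatively norm-compact. -/
def IsWeakStarLRC {X : Type*} [NormedAddCommGroup X] [NormedSpace ℝ X]
    (E : Set (StrongDual ℝ X)) : Prop :=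
  ∀ y ∈ E, ∃ U : Set (WeakDual ℝ X), IsOpen U ∧ StrongDual.toWeakDual y ∈ U ∧
    IsCompact (closure (E ∩ (fun f : StrongDual ℝ X => StrongDual.toWeakDual f) ⁻¹' U))

/-- `E` is a countable union of weak-* LRC sets. -/
def IsSigmaWeakStarLRC {X : Type*} [NormedAddCommGroup X] [NormedSpace ℝ X]
    (E : Set (StrongDual ℝ X)) : Prop :=
  ∃ E' : ℕ → Set (StrongDual ℝ X), E = ⋃ n, E' n ∧ ∀ n, IsWeakStarLRC (E' n)

/-- `E` is a countable union of weak-*-compact sets. -/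
def IsWeakStarSigmaCompact {X : Type*} [NormedAddCommGroup X] [NormedSpace ℝ X]
    (E : Set (StrongDual ℝ X)) : Prop :=
  ∃ C : ℕ → Set (WeakDual ℝ X), (∀ n, IsCompact (C n)) ∧
    (fun f : StrongDual ℝ X => StrongDual.toWeakDual f) '' E = ⋃ n, C n

/-!
Choose `a n > 1` strictly decreasing to `1` with `a n * b n > 1`, and let `|||x|||` be the
supremum of `f x` over `F`. A functional of `H n` first appears in some layer `k ≤ n`, so
`a n * |h x| ≤ |||x|||`; together with the covering by the `S n` this gives `‖x‖ < |||x|||` for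
`x ≠ 0`. Hence when `|||x||| = 1` we have `a N * ‖x‖ < 1` for some `N`, all layers beyond `N` stay
below `1` at `x`, and the supremum is attained in one of finitely many layers: there the relative
boundary `H n` produces a norming functional, which strict monotonicity of `a` keeps out of
`H (n - 1)`. The same localisation puts every weak-* limit point of `F` in the closure of a single
layer, which transfers property (*). Finally (*) allows only finitely many functionals of `F` to
norm points of the compact unit sphere of a finite-dimensional subspace, so its unit ball is a
bounded intersection of finitely many half-spaces, the convex hull of its finitely many extreme
points by Krein–Milman.
-/

lemma sInf_le_of_sInf_pos {s : Set ℝ} {x : ℝ} (hs : 0 < sInf s) (hx : x ∈ s) : sInf s ≤ x := by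
  refine csInf_le ?_ hx
  by_contra h
  rw [Real.sInf_of_not_bddBelow h] at hs
  exact hs.false

lemma exists_strictAnti_gt_tendsto {v : ℕ → ℝ} {L : ℝ} (hv : Tendsto v atTop (𝓝 L)) :
    ∃ a : ℕ → ℝ, StrictAnti a ∧ (∀ n, v n < a n) ∧ Tendsto a atTop (𝓝 L) := by
  obtain ⟨B, hB⟩ := hv.bddAbove_range
  have hbdd : ∀ n, BddAbove (range fun k => v (n + k)) :=
    fun n => ⟨B, by rintro _ ⟨k, rfl⟩; exact hB ⟨_, rfl⟩⟩
  set T : ℕ → ℝ := fun n => ⨆ k, v (n + k)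
  have hT_anti : Antitone T := fun m n hmn => ciSup_le fun k => by
    simpa [← add_assoc, Nat.add_sub_cancel' hmn] using le_ciSup (hbdd m) (n - m + k)
  have hvT : ∀ n, v n ≤ T n := fun n => le_ciSup (hbdd n) 0
  have hT : Tendsto T atTop (𝓝 L) := by
    refine tendsto_order.2
      ⟨fun l hl => (hv.eventually_const_lt hl).mono fun n hn => hn.trans_le (hvT n), fun u hu => ?_⟩
    obtain ⟨N, hN⟩ := eventually_atTop.1 (hv.eventually_lt_const (show L < (L + u) / 2 by linarith))
    refine eventually_atTop.2 ⟨N, fun n hn => ?_⟩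
    have : T n ≤ (L + u) / 2 := ciSup_le fun k => (hN (n + k) (by omega)).le
    linarith
  refine ⟨fun n => T n + 1 / (n + 1), fun m n hmn => ?_, fun n => ?_, ?_⟩
  · have : (1 : ℝ) / (n + 1) < 1 / (m + 1) := by gcongr
    linarith [hT_anti hmn.le]
  · linarith [hvT n, Nat.one_div_pos_of_nat (α := ℝ) (n := n)]
  · simpa using hT.add tendsto_one_div_add_atTop_nhds_zero_nat

section

variable {X : Type*} [NormedAddCommGroup X] [NormedSpace ℝ X]

lemma ContinuousLinearMap.apply_le_of_opNorm_le {f : StrongDual ℝ X} {A : ℝ} (hf : ‖f‖ ≤ A)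
    (x : X) : f x ≤ A * ‖x‖ :=
  (le_abs_self _).trans (f.le_of_opNorm_le hf x)

/-- The support function of `F` (junk value `0` when `F` is empty). -/
def dualSup (F : Set (StrongDual ℝ X)) (x : X) : ℝ :=
  sSup ((fun f : StrongDual ℝ X => f x) '' F)

section dualSup

variable {F : Set (StrongDual ℝ X)} {A : ℝ}

lemma le_dualSup (hF : ∀ f ∈ F, ‖f‖ ≤ A) {f : StrongDual ℝ X} (hf : f ∈ F) (x : X) :
    f x ≤ dualSup F x :=
  le_csSup ⟨A * ‖x‖, by rintro _ ⟨f, hf, rfl⟩; exact f.apply_le_of_opNorm_le (hF f hf) x⟩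
    (mem_image_of_mem _ hf)

lemma dualSup_le {x : X} {r : ℝ} (hr : 0 ≤ r) (h : ∀ f ∈ F, f x ≤ r) : dualSup F x ≤ r :=
  Real.sSup_le (by rintro _ ⟨f, hf, rfl⟩; exact h f hf) hr

lemma dualSup_smul {r : ℝ} (hr : 0 ≤ r) (x : X) : dualSup F (r • x) = r * dualSup F x := by
  have : (fun f : StrongDual ℝ X => f (r • x)) '' F = r • (fun f : StrongDual ℝ X => f x) '' F := by
    rw [← Set.image_smul, Set.image_image]
    simp
  rw [dualSup, this, Real.sSup_smul_of_nonneg hr, smul_eq_mul, dualSup]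

lemma dualSup_zero : dualSup F 0 = 0 := by
  simpa using dualSup_smul (F := F) le_rfl 0

lemma dualSup_neg (hneg : ∀ f ∈ F, -f ∈ F) (x : X) : dualSup F (-x) = dualSup F x := by
  unfold dualSup
  congr 1
  ext t
  constructor <;> rintro ⟨f, hf, rfl⟩ <;> exact ⟨-f, hneg f hf, by simp⟩

lemma abs_apply_le_dualSup (hneg : ∀ f ∈ F, -f ∈ F) (hF : ∀ f ∈ F, ‖f‖ ≤ A)
    {f : StrongDual ℝ X} (hf : f ∈ F) (x : X) : |f x| ≤ dualSup F x :=
  abs_le.2 ⟨neg_le.1 (by simpa using le_dualSup hF (hneg f hf) x), le_dualSup hF hf x⟩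

lemma dualSup_nonneg (hneg : ∀ f ∈ F, -f ∈ F) (hF : ∀ f ∈ F, ‖f‖ ≤ A) (x : X) :
    0 ≤ dualSup F x := by
  rcases F.eq_empty_or_nonempty with rfl | ⟨f, hf⟩
  · simp [dualSup]
  · exact (abs_nonneg _).trans (abs_apply_le_dualSup hneg hF hf x)

lemma exists_seminorm_eq_dualSup (hneg : ∀ f ∈ F, -f ∈ F) (hF : ∀ f ∈ F, ‖f‖ ≤ A) :
    ∃ ν : Seminorm ℝ X, ⇑ν = dualSup F := by
  refine ⟨Seminorm.of (dualSup F) (fun x y => ?_) (fun r x => ?_), rfl⟩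
  · refine dualSup_le (add_nonneg (dualSup_nonneg hneg hF x) (dualSup_nonneg hneg hF y))
      fun f hf => ?_
    rw [map_add]
    exact add_le_add (le_dualSup hF hf x) (le_dualSup hF hf y)
  · rcases le_or_gt 0 r with hr | hr
    · rw [dualSup_smul hr, Real.norm_of_nonneg hr]
    · rw [show r • x = -r • -x by simp, dualSup_smul (neg_nonneg.2 hr.le), dualSup_neg hneg,
        Real.norm_of_nonpos hr.le]

end dualSup

namespace IsWeakStarLimitPoint

variable {F G : Set (StrongDual ℝ X)} {g : StrongDual ℝ X}

lemma mono (h : IsWeakStarLimitPoint F g) (hFG : F ⊆ G) : IsWeakStarLimitPoint G g :=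
  fun U hU hgU => (h U hU hgU).mono fun _ hf => ⟨hFG hf.1, hf.2⟩

lemma inter_preimage (h : IsWeakStarLimitPoint F g) {V : Set (WeakDual ℝ X)} (hV : IsOpen V)
    (hgV : StrongDual.toWeakDual g ∈ V) :
    IsWeakStarLimitPoint (F ∩ StrongDual.toWeakDual ⁻¹' V) g :=
  fun U hU hgU => (h (U ∩ V) (hU.inter hV) ⟨hgU, hgV⟩).mono fun _ hf => ⟨⟨hf.1, hf.2.2⟩, hf.2.1⟩

lemma not_empty : ¬IsWeakStarLimitPoint (∅ : Set (StrongDual ℝ X)) g :=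
  fun h => h univ isOpen_univ trivial (finite_empty.subset fun _ hf => hf.1)

lemma union (h : IsWeakStarLimitPoint (F ∪ G) g) :
    IsWeakStarLimitPoint F g ∨ IsWeakStarLimitPoint G g := by
  by_contra! hFG
  simp only [IsWeakStarLimitPoint, not_forall, Set.not_infinite] at hFG
  obtain ⟨⟨U, hU, hgU, hUfin⟩, ⟨V, hV, hgV, hVfin⟩⟩ := hFG
  refine h (U ∩ V) (hU.inter hV) ⟨hgU, hgV⟩ ((hUfin.union hVfin).subset ?_)
  rintro f ⟨hf | hf, hfU, hfV⟩
  exacts [Or.inl ⟨hf, hfU⟩, Or.inr ⟨hf, hfV⟩]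

lemma exists_of_biUnion {ι : Type*} {s : Finset ι} {F : ι → Set (StrongDual ℝ X)}
    (h : IsWeakStarLimitPoint (⋃ i ∈ s, F i) g) : ∃ i ∈ s, IsWeakStarLimitPoint (F i) g := by
  classical
  induction s using Finset.induction_on with
  | empty => exact absurd (by simpa using h) not_empty
  | insert i s _ ih =>
    rw [Finset.set_biUnion_insert] at h
    rcases h.union with h | h
    · exact ⟨i, Finset.mem_insert_self i s, h⟩
    · obtain ⟨j, hj, hj'⟩ := ih h
      exact ⟨j, Finset.mem_insert_of_mem hj, hj'⟩

lemma smul (h : IsWeakStarLimitPoint F g) {r : ℝ} (hr : r ≠ 0) :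
    IsWeakStarLimitPoint (r • F) (r • g) := by
  intro U hU hgU
  have hcont : Continuous fun ψ : WeakDual ℝ X => r • ψ := continuous_const_smul r
  refine ((h _ (hU.preimage hcont) (by simpa using hgU)).image
    (smul_right_injective _ hr).injOn).mono ?_
  rintro _ ⟨f, ⟨hf, hfU⟩, rfl⟩
  exact ⟨smul_mem_smul_set hf, by simpa using hfU⟩

lemma of_smul {r : ℝ} (h : IsWeakStarLimitPoint (r • F) g) (hr : r ≠ 0) :
    IsWeakStarLimitPoint F (r⁻¹ • g) := by
  simpa [inv_smul_smul₀ hr] using h.smul (inv_ne_zero hr)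

lemma neg (h : IsWeakStarLimitPoint F g) : IsWeakStarLimitPoint (-F) (-g) := by
  intro U hU hgU
  refine ((h _ (hU.preimage continuous_neg) (by simpa using hgU)).image neg_injective.injOn).mono ?_
  rintro _ ⟨f, ⟨hf, hfU⟩, rfl⟩
  exact ⟨by simpa using hf, by simpa using hfU⟩

lemma apply_le_dualSup (h : IsWeakStarLimitPoint F g) {A : ℝ} (hF : ∀ f ∈ F, ‖f‖ ≤ A) (x : X) :
    g x ≤ dualSup F x := by
  by_contra! hlt
  obtain ⟨f, hf, hfx⟩ := (h {ψ | dualSup F x < ψ x}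
    (isOpen_lt continuous_const (WeakDual.eval_continuous x)) hlt).nonempty
  exact (le_dualSup hF hf x).not_gt hfx

end IsWeakStarLimitPoint

lemma PropertyStar.apply_lt_one {H : Set (StrongDual ℝ X)} (hH : PropertyStar H) {A : ℝ}
    (hHA : ∀ h ∈ H, ‖h‖ ≤ A) {g : StrongDual ℝ X} (hg : IsWeakStarLimitPoint H g) {y : X}
    (hy : ∀ h ∈ H, h y ≤ 1) : g y < 1 := by
  by_contra! h1
  have hle : dualSup H y ≤ 1 := dualSup_le zero_le_one hy
  exact (hH g hg y (hle.antisymm (h1.trans (hg.apply_le_dualSup hHA y)))).not_ge h1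

lemma exists_mapClusterPt_toWeakDual {ι : Type*} {l : Filter ι} [l.NeBot] {u : ι → StrongDual ℝ X}
    {A : ℝ} (hu : ∀ i, ‖u i‖ ≤ A) :
    ∃ g : StrongDual ℝ X,
      MapClusterPt (StrongDual.toWeakDual g) l fun i => StrongDual.toWeakDual (u i) := by
  obtain ⟨ψ, -, hψ⟩ := (WeakDual.isCompact_closedBall (𝕜 := ℝ) (E := X) 0 A).exists_mapClusterPt
    (u := fun i => StrongDual.toWeakDual (u i)) (f := l)
    (tendsto_principal.2 (Eventually.of_forall fun i => by simpa using hu i))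
  exact ⟨WeakDual.toStrongDual ψ, hψ⟩

lemma MapClusterPt.isWeakStarLimitPoint {F : Set (StrongDual ℝ X)} {g : StrongDual ℝ X}
    {u : ℕ → StrongDual ℝ X}
    (hg : MapClusterPt (StrongDual.toWeakDual g) atTop fun k => StrongDual.toWeakDual (u k))
    (hu : Function.Injective u) (huF : ∀ k, u k ∈ F) : IsWeakStarLimitPoint F g := by
  intro U hU hgU
  have hfreq := mapClusterPt_iff_frequently.1 hg U (hU.mem_nhds hgU)
  rw [Nat.frequently_atTop_iff_infinite] at hfreq
  exact (hfreq.image hu.injOn).mono (by rintro _ ⟨k, hk, rfl⟩; exact ⟨huF k, hk⟩)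

/-- A weak-* cluster point `g` of infinitely many such functionals, taken along a subsequence
whose points of attainment converge to `z₀ ∈ K`, would satisfy `g z₀ ≥ 1`, contradicting (*). -/
lemma PropertyStar.finite_setOf_apply_eq_one {F : Set (StrongDual ℝ X)} (hstar : PropertyStar F)
    {A : ℝ} (hF : ∀ f ∈ F, ‖f‖ ≤ A) {K : Set X} (hK : IsCompact K)
    (hK1 : ∀ z ∈ K, dualSup F z = 1) : {f | f ∈ F ∧ ∃ z ∈ K, f z = 1}.Finite := by
  by_contra hinf
  set e := Set.Infinite.natEmbedding _ hinf
  have he k : (e k : StrongDual ℝ X) ∈ F ∧ ∃ z ∈ K, (e k : StrongDual ℝ X) z = 1 := (e k).2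
  choose z hzK hz1 using fun k => (he k).2
  obtain ⟨z₀, hz₀K, φ, hφ, hlim⟩ := hK.tendsto_subseq hzK
  obtain ⟨g, hg⟩ := exists_mapClusterPt_toWeakDual (l := atTop)
    (u := fun k => (e (φ k) : StrongDual ℝ X)) fun k => hF _ (he (φ k)).1
  have hgz : g z₀ < 1 := hstar g (hg.isWeakStarLimitPoint
    ((Subtype.val_injective.comp e.injective).comp hφ.injective) fun k => (he (φ k)).1) z₀
    (hK1 z₀ hz₀K)
  have hfreq : ∃ᶠ k in atTop, (e (φ k) : StrongDual ℝ X) z₀ < (1 + g z₀) / 2 :=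
    mapClusterPt_iff_frequently.1 hg _ ((isOpen_lt (WeakDual.eval_continuous z₀)
      continuous_const).mem_nhds (by change g z₀ < (1 + g z₀) / 2; linarith))
  have hclose : ∀ᶠ k in atTop, A * ‖z (φ k) - z₀‖ < (1 - g z₀) / 2 := by
    have := (tendsto_iff_norm_sub_tendsto_zero.1 hlim).const_mul A
    exact this.eventually_lt_const (by rw [mul_zero]; linarith)
  obtain ⟨k, hk₁, hk₂⟩ := (hfreq.and_eventually hclose).exists
  have := (e (φ k) : StrongDual ℝ X).apply_le_of_opNorm_le (hF _ (he (φ k)).1) (z (φ k) - z₀)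
  rw [map_sub, hz1] at this
  linarith

lemma finite_extremePoints_setOf_forall_le_one {V E : Type*} [AddCommGroup V] [Module ℝ V]
    [FunLike E V ℝ] [LinearMapClass E ℝ V ℝ] (Y : Submodule ℝ V) {G : Set E} (hG : G.Finite) :
    (extremePoints ℝ {x | x ∈ Y ∧ ∀ f ∈ G, f x ≤ 1}).Finite := by
  set K := {x | x ∈ Y ∧ ∀ f ∈ G, f x ≤ 1}
  -- an extreme point is determined by the constraints that are active at it
  refine Set.Finite.of_finite_image (f := fun e => {f ∈ G | f e = 1})
    (hG.finite_subsets.subset (by rintro _ ⟨e, -, rfl⟩; exact sep_subset _ _)) ?_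
  intro e he e' he' hee'
  have hact : ∀ f ∈ G, f e = 1 → f (e' - e) = 0 := fun f hf hfe => by
    have : f ∈ {f ∈ G | f e' = 1} := by
      rw [← show {f ∈ G | f e = 1} = {f ∈ G | f e' = 1} from hee']; exact ⟨hf, hfe⟩
    rw [map_sub, this.2, hfe, sub_self]
  have hnear : ∀ᶠ t in 𝓝 (0 : ℝ), e + t • (e' - e) ∈ K := by
    have hG' : ∀ᶠ t in 𝓝 (0 : ℝ), ∀ f ∈ G, f (e + t • (e' - e)) ≤ 1 := by
      refine (eventually_all_finite hG).2 fun f hf => ?_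
      by_cases hfe : f e = 1
      · exact Eventually.of_forall fun t => by simp [hact f hf hfe, hfe]
      · have hlt : f e < 1 := (he.1.2 f hf).lt_of_ne hfe
        have hcont : Tendsto (fun t : ℝ => f e + t * f (e' - e)) (𝓝 0) (𝓝 (f e + 0 * f (e' - e))) :=
          (continuous_const.add (continuous_id.mul continuous_const)).tendsto 0
        filter_upwards [hcont.eventually_lt_const (by simpa using hlt)] with t ht
        simpa using ht.le
    filter_upwards [hG'] with t ht
    exact ⟨Y.add_mem he.1.1 (Y.smul_mem t (Y.sub_mem he'.1.1 he.1.1)), ht⟩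
  obtain ⟨ε, hε, hball⟩ := Metric.eventually_nhds_iff.1 hnear
  have hseg : e ∈ openSegment ℝ (e + (ε / 2) • (e' - e)) (e + (-(ε / 2)) • (e' - e)) :=
    ⟨1 / 2, 1 / 2, by norm_num, by norm_num, by norm_num, by module⟩
  have hε' : |ε / 2| < ε := by rw [abs_of_pos (half_pos hε)]; exact half_lt_self hε
  have heq := he.2 (hball (by rwa [Real.dist_eq, sub_zero]))
    (hball (by rwa [Real.dist_eq, sub_zero, abs_neg])) hseg
  rw [add_eq_left, smul_eq_zero, sub_eq_zero] at heq
  exact (heq.resolve_left (by positivity)).symm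

lemma setOf_le_one_eq_setOf_forall_le_one (ν : Seminorm ℝ X) (Y : Submodule ℝ X)
    {G : Set (StrongDual ℝ X)} (hle : ∀ f ∈ G, ∀ x, f x ≤ ν x)
    (hatt : ∀ x ∈ Y, ν x = 1 → ∃ f ∈ G, f x = 1) :
    {x | x ∈ Y ∧ ν x ≤ 1} = {x | x ∈ Y ∧ ∀ f ∈ G, f x ≤ 1} := by
  ext x
  refine ⟨fun ⟨hx, h1⟩ => ⟨hx, fun f hf => (hle f hf x).trans h1⟩, fun ⟨hx, h⟩ => ⟨hx, ?_⟩⟩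
  by_contra! h1
  have hpos : 0 < ν x := one_pos.trans h1
  obtain ⟨f, hf, hfx⟩ := hatt ((ν x)⁻¹ • x) (Y.smul_mem _ hx) (by
    rw [map_smul_eq_mul, Real.norm_of_nonneg (inv_nonneg.2 hpos.le), inv_mul_cancel₀ hpos.ne'])
  rw [map_smul, smul_eq_mul, inv_mul_eq_one₀ hpos.ne'] at hfx
  linarith [h f hf]

lemma isBounded_setOf_le_one {E : Type*} [SeminormedAddCommGroup E] {ν : E → ℝ} {c : ℝ}
    (hc : 0 < c) (hν : ∀ x, c * ‖x‖ ≤ ν x) :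
    Bornology.IsBounded {x | ν x ≤ 1} :=
  isBounded_iff_forall_norm_le.2 ⟨c⁻¹, fun x hx => by
    rw [← one_div, le_div_iff₀' hc]; exact (hν x).trans hx⟩

lemma Submodule.isCompact_of_isClosed_of_isBounded {Y : Submodule ℝ X} [FiniteDimensional ℝ Y]
    {K : Set X} (hKY : K ⊆ Y) (hK : IsClosed K) (hKb : Bornology.IsBounded K) : IsCompact K := by
  have hK' : K = Subtype.val '' (Subtype.val ⁻¹' K : Set Y) := by
    rw [image_preimage_eq_inter_range, Subtype.range_coe_subtype]
    exact (inter_eq_left.2 hKY).symm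
  obtain ⟨C, hC⟩ := isBounded_iff_forall_norm_le.1 hKb
  rw [hK']
  exact (Metric.isCompact_of_isClosed_isBounded (hK.preimage continuous_subtype_val)
    ((isBounded_iff_forall_norm_le (s := (Subtype.val ⁻¹' K : Set Y))).2
      ⟨C, fun y hy => hC y hy⟩)).image continuous_subtype_val

lemma exists_finite_convexHull_eq (ν : Seminorm ℝ X) {c : ℝ} (hc : 0 < c)
    (hν : ∀ x, c * ‖x‖ ≤ ν x) (Y : Submodule ℝ X) [FiniteDimensional ℝ Y]
    {G : Set (StrongDual ℝ X)} (hG : G.Finite) (hle : ∀ f ∈ G, ∀ x, f x ≤ ν x)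
    (hatt : ∀ x ∈ Y, ν x = 1 → ∃ f ∈ G, f x = 1) :
    ∃ T : Set X, T.Finite ∧ {x | x ∈ Y ∧ ν x ≤ 1} = convexHull ℝ T := by
  have hball := setOf_le_one_eq_setOf_forall_le_one ν Y hle hatt
  set K := {x | x ∈ Y ∧ ∀ f ∈ G, f x ≤ 1}
  have hKc : IsCompact K := by
    refine Submodule.isCompact_of_isClosed_of_isBounded (Y := Y) (fun x hx => hx.1) ?_ ?_
    · have : K = (Y : Set X) ∩ ⋂ f ∈ G, {x | f x ≤ 1} := by ext; simp [K]
      rw [this]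
      exact Y.closed_of_finiteDimensional.inter
        (isClosed_biInter fun (f : StrongDual ℝ X) _ => isClosed_le f.continuous continuous_const)
    · rw [← hball]
      exact (isBounded_setOf_le_one hc hν).subset fun x hx => hx.2
  have hKconv : Convex ℝ K := by
    intro x hx y hy s t hs ht hst
    refine ⟨Y.add_mem (Y.smul_mem s hx.1) (Y.smul_mem t hy.1), fun f hf => ?_⟩
    simp only [map_add, map_smul, smul_eq_mul]
    nlinarith [hx.2 f hf, hy.2 f hf]
  have hext := finite_extremePoints_setOf_forall_le_one Y hG
  exact ⟨_, hext, hball.trans ((closure_convexHull_extremePoints hKc hKconv).symm.trans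
    (hext.isClosed_convexHull ℝ).closure_eq)⟩

lemma IsEquivNorm.continuous {ν : Seminorm ℝ X} (hν : IsEquivNorm ν) : Continuous ν := by
  obtain ⟨c, C, -, h⟩ := hν
  refine Seminorm.continuous_of_continuousAt_zero ?_
  rw [ContinuousAt, map_zero]
  exact squeeze_zero (fun x => apply_nonneg ν x) (fun x => (h x).2)
    (by simpa using (continuous_norm.tendsto (0 : X)).const_mul C)

lemma PropertyStar.isPolyhedralNorm {F : Set (StrongDual ℝ X)} (hstar : PropertyStar F) {A : ℝ}
    (hF : ∀ f ∈ F, ‖f‖ ≤ A) {ν : Seminorm ℝ X} (hν : IsEquivNorm ν)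
    (hνF : ⇑ν = dualSup F) (hbound : IsBoundaryFor ν F) : IsPolyhedralNorm ν := by
  intro Y _
  obtain ⟨c, C, hc, hcC⟩ := id hν
  set K := {z | z ∈ Y ∧ ν z = 1}
  have hK : IsCompact K :=
    Submodule.isCompact_of_isClosed_of_isBounded (Y := Y) (fun z hz => hz.1)
      (Y.closed_of_finiteDimensional.inter (isClosed_eq hν.continuous continuous_const))
      ((isBounded_setOf_le_one hc fun x => (hcC x).1).subset fun z hz => hz.2.le)
  refine exists_finite_convexHull_eq ν hc (fun x => (hcC x).1) Y
    (hstar.finite_setOf_apply_eq_one hF hK fun z hz => (congrFun hνF z).symm.trans hz.2)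
    (fun f hf => hbound.1 f hf.1) fun x hx hx1 => ?_
  obtain ⟨f, hf, hfx⟩ := hbound.2 x hx1
  exact ⟨f, ⟨hf, x, ⟨hx, hx1⟩, hfx⟩, hfx⟩

lemma exists_forall_le_max_of_forall_ge (g : ℕ → ℝ) {N : ℕ} {θ : ℝ} (h : ∀ n, N ≤ n → g n ≤ θ) :
    ∃ n₀, ∀ n, g n ≤ max θ (g n₀) := by
  obtain ⟨n₀, -, hn₀⟩ := (Finset.range (N + 1)).exists_max_image g ⟨0, by simp⟩
  refine ⟨n₀, fun n => ?_⟩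
  rcases lt_or_ge n N with hn | hn
  · exact (hn₀ n (Finset.mem_range.2 (by omega))).trans (le_max_right _ _)
  · exact (h n hn).trans (le_max_left _ _)

lemma exists_mul_norm_lt_one {F : Set (StrongDual ℝ X)} (hnorm : ∀ x ≠ 0, ‖x‖ < dualSup F x)
    {a : ℕ → ℝ} (ha : Tendsto a atTop (𝓝 1)) {x : X} (hx : dualSup F x = 1) :
    ∃ N, a N * ‖x‖ < 1 := by
  have hx0 : x ≠ 0 := by rintro rfl; simp [dualSup_zero] at hx
  have hlt : ‖x‖ < 1 := hx ▸ hnorm x hx0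
  exact ((ha.mul_const ‖x‖).eventually_lt_const (by simpa using hlt)).exists

/-- At `n = 0`, `H (n - 1)` is `H 0` (truncated subtraction), so layer `0` is always empty. -/
def weightedLayer (a : ℕ → ℝ) (H : ℕ → Set (StrongDual ℝ X)) (n : ℕ) : Set (StrongDual ℝ X) :=
  a n • ((H n \ H (n - 1)) ∪ -(H n \ H (n - 1)))

def weightedLayers (a : ℕ → ℝ) (H : ℕ → Set (StrongDual ℝ X)) : Set (StrongDual ℝ X) :=
  ⋃ n, weightedLayer a H n

section weightedLayers

variable {a : ℕ → ℝ} {H : ℕ → Set (StrongDual ℝ X)}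

lemma smul_mem_weightedLayers {n : ℕ} {h : StrongDual ℝ X} (hh : h ∈ H n) (hh' : h ∉ H (n - 1)) :
    a n • h ∈ weightedLayers a H :=
  mem_iUnion.2 ⟨n, smul_mem_smul_set (Or.inl ⟨hh, hh'⟩)⟩

lemma neg_mem_weightedLayers {f : StrongDual ℝ X} (hf : f ∈ weightedLayers a H) :
    -f ∈ weightedLayers a H := by
  obtain ⟨n, g, hg, rfl⟩ := mem_iUnion.1 hf
  refine mem_iUnion.2 ⟨n, -g, ?_, smul_neg (a n) g⟩
  rcases hg with hg | hg
  · exact Or.inr (Set.neg_mem_neg.2 hg)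
  · exact Or.inl hg

lemma norm_le_of_mem_weightedLayer (hball : ∀ n, H n ⊆ {f | ‖f‖ ≤ 1}) {n : ℕ} (ha : 0 ≤ a n)
    {f : StrongDual ℝ X} (hf : f ∈ weightedLayer a H n) : ‖f‖ ≤ a n := by
  obtain ⟨g, hg, rfl⟩ := hf
  have hg1 : ‖g‖ ≤ 1 := by
    rcases hg with hg | hg
    · exact hball n hg.1
    · simpa using hball n hg.1
  rw [norm_smul, Real.norm_of_nonneg ha]
  exact mul_le_of_le_one_right ha hg1

lemma norm_le_of_mem_weightedLayers (hball : ∀ n, H n ⊆ {f | ‖f‖ ≤ 1}) (ha : Antitone a)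
    (ha0 : ∀ n, 0 ≤ a n) {f : StrongDual ℝ X} (hf : f ∈ weightedLayers a H) : ‖f‖ ≤ a 0 := by
  obtain ⟨n, hn⟩ := mem_iUnion.1 hf
  exact (norm_le_of_mem_weightedLayer hball (ha0 n) hn).trans (ha (Nat.zero_le n))

lemma apply_le_of_mem_weightedLayer (hball : ∀ n, H n ⊆ {f | ‖f‖ ≤ 1}) {n : ℕ} (ha : 0 ≤ a n)
    {f : StrongDual ℝ X} (hf : f ∈ weightedLayer a H n) (x : X) :
    f x ≤ a n * max (dualSup (H n) x) (dualSup (H n) (-x)) := by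
  obtain ⟨g, hg, rfl⟩ := hf
  rw [smul_apply, smul_eq_mul]
  refine mul_le_mul_of_nonneg_left ?_ ha
  rcases hg with hg | hg
  · exact (le_dualSup (hball n) hg.1 x).trans (le_max_left _ _)
  · have := le_dualSup (hball n) hg.1 (-x)
    rw [neg_apply, map_neg, neg_neg] at this
    exact this.trans (le_max_right _ _)

/-- A functional of `H n` first appears in some layer `k ≤ n`, where `a n ≤ a k`. -/
lemma mul_abs_apply_le_dualSup (hH0 : H 0 = ∅) (ha : Antitone a) {A : ℝ}
    (hF : ∀ f ∈ weightedLayers a H, ‖f‖ ≤ A) {n : ℕ} {h : StrongDual ℝ X} (hh : h ∈ H n) (x : X) :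
    a n * |h x| ≤ dualSup (weightedLayers a H) x := by
  classical
  have hex : ∃ k, h ∈ H k := ⟨n, hh⟩
  set k := Nat.find hex
  have hk0 : k ≠ 0 := fun hk => by simpa [k, hk, hH0] using Nat.find_spec hex
  have hmem := smul_mem_weightedLayers (a := a) (Nat.find_spec hex) (Nat.find_min hex (by omega))
  have hpos := le_dualSup hF hmem x
  have hneg := le_dualSup hF (neg_mem_weightedLayers hmem) x
  rw [smul_apply, smul_eq_mul] at hpos
  rw [neg_apply, smul_apply, smul_eq_mul] at hneg
  calc a n * |h x| ≤ a k * |h x| :=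
        mul_le_mul_of_nonneg_right (ha (Nat.find_min' hex hh)) (abs_nonneg _)
    _ ≤ |a k * h x| := by
        rw [abs_mul]; exact mul_le_mul_of_nonneg_right (le_abs_self _) (abs_nonneg _)
    _ ≤ _ := abs_le.2 ⟨by linarith, hpos⟩

lemma mul_dualSup_le_dualSup (hH0 : H 0 = ∅) (ha : Antitone a) {A : ℝ}
    (hF : ∀ f ∈ weightedLayers a H, ‖f‖ ≤ A) {n : ℕ} (han : 0 ≤ a n) (x : X) :
    a n * dualSup (H n) x ≤ dualSup (weightedLayers a H) x := by
  rw [← dualSup_smul han]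
  refine dualSup_le (dualSup_nonneg (fun _ => neg_mem_weightedLayers) hF x) fun h hh => ?_
  rw [map_smul, smul_eq_mul]
  exact (mul_le_mul_of_nonneg_left (le_abs_self _) han).trans
    (mul_abs_apply_le_dualSup hH0 ha hF hh x)

/-- Strict decrease of `a` keeps a functional of `H n` that attains `1 / a n` at a unit vector of
`dualSup` out of `H (n - 1)`. -/
lemma exists_apply_eq_one_of_dualSup_eq (hH0 : H 0 = ∅) (ha : StrictAnti a) {A : ℝ}
    (hF : ∀ f ∈ weightedLayers a H, ‖f‖ ≤ A) {n : ℕ} (han : 0 < a n)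
    (hrel : IsRelativeBoundary (H n)) {x : X} (hx : dualSup (weightedLayers a H) x = 1)
    (hxn : dualSup (H n) x = (a n)⁻¹) : ∃ f ∈ weightedLayers a H, f x = 1 := by
  obtain ⟨h, hh, hh1⟩ := hrel (a n • x) (by
    rw [← dualSup, dualSup_smul han.le, hxn, mul_inv_cancel₀ han.ne'])
  rw [map_smul, smul_eq_mul] at hh1
  have hn : n ≠ 0 := by rintro rfl; simp [hH0] at hh
  refine ⟨a n • h, smul_mem_weightedLayers hh fun hh' => ?_, by rwa [smul_apply, smul_eq_mul]⟩
  have hle := (mul_abs_apply_le_dualSup hH0 ha.antitone hF hh' x).trans hx.le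
  have hlt : a n < a (n - 1) := ha (by omega)
  have habs : a n * |h x| = 1 := by rw [← abs_of_pos han, ← abs_mul, hh1, abs_one]
  have hpos : 0 < |h x| := abs_pos.2 fun h0 => by simp [h0] at hh1
  linarith [mul_lt_mul_of_pos_right hlt hpos]

lemma dualSup_le_norm (hball : ∀ n, H n ⊆ {f | ‖f‖ ≤ 1}) (n : ℕ) (x : X) :
    dualSup (H n) x ≤ ‖x‖ :=
  dualSup_le (norm_nonneg x) fun h hh => by simpa using h.apply_le_of_opNorm_le (hball n hh) x

/-- Beyond the index `N` with `a N * ‖x‖ < 1` the layers stay below `1` at `x`, so the supremum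
`dualSup (weightedLayers a H) x = 1` is attained by one of finitely many layers. -/
lemma exists_mul_max_dualSup_eq_one (hH0 : H 0 = ∅) (ha : Antitone a) (ha_pos : ∀ n, 0 < a n)
    (hball : ∀ n, H n ⊆ {f | ‖f‖ ≤ 1}) {A : ℝ} (hF : ∀ f ∈ weightedLayers a H, ‖f‖ ≤ A)
    {x : X} (hx : dualSup (weightedLayers a H) x = 1) {N : ℕ} (hN : a N * ‖x‖ < 1) :
    ∃ n, a n * max (dualSup (H n) x) (dualSup (H n) (-x)) = 1 := by
  obtain ⟨n, hn⟩ := exists_forall_le_max_of_forall_ge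
    (fun n => a n * max (dualSup (H n) x) (dualSup (H n) (-x))) (N := N) fun m hm =>
      (mul_le_mul_of_nonneg_left (max_le (dualSup_le_norm hball m x)
        (by simpa using dualSup_le_norm hball m (-x))) (ha_pos m).le).trans
      (mul_le_mul_of_nonneg_right (ha hm) (norm_nonneg x))
  refine ⟨n, le_antisymm ?_ ?_⟩
  · rw [mul_max_of_nonneg _ _ (ha_pos n).le]
    refine max_le ((mul_dualSup_le_dualSup hH0 ha hF (ha_pos n).le x).trans hx.le)
      ((mul_dualSup_le_dualSup hH0 ha hF (ha_pos n).le (-x)).trans ?_)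
    rw [dualSup_neg (fun _ => neg_mem_weightedLayers) x, hx]
  · have : 1 ≤ max (a N * ‖x‖) (a n * max (dualSup (H n) x) (dualSup (H n) (-x))) := by
      refine hx ▸ dualSup_le ((mul_nonneg (ha_pos N).le (norm_nonneg x)).trans (le_max_left _ _))
        fun f hf => ?_
      obtain ⟨m, hm⟩ := mem_iUnion.1 hf
      exact (apply_le_of_mem_weightedLayer hball (ha_pos m).le hm x).trans (hn m)
    exact (le_max_iff.1 this).resolve_left hN.not_ge

lemma isBoundaryFor_weightedLayers (hH0 : H 0 = ∅) (ha : StrictAnti a) (ha_pos : ∀ n, 0 < a n)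
    (ha_lim : Tendsto a atTop (𝓝 1)) (hball : ∀ n, H n ⊆ {f | ‖f‖ ≤ 1})
    (hrel : ∀ n, IsRelativeBoundary (H n)) {A : ℝ} (hF : ∀ f ∈ weightedLayers a H, ‖f‖ ≤ A)
    (hnorm : ∀ x ≠ 0, ‖x‖ < dualSup (weightedLayers a H) x) :
    IsBoundaryFor (dualSup (weightedLayers a H)) (weightedLayers a H) := by
  refine ⟨fun f hf x => le_dualSup hF hf x, fun x hx => ?_⟩
  obtain ⟨N, hN⟩ := exists_mul_norm_lt_one hnorm ha_lim hx
  obtain ⟨n, hn⟩ := exists_mul_max_dualSup_eq_one hH0 ha.antitone ha_pos hball hF hx hN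
  have hmax := eq_inv_of_mul_eq_one_right hn
  rcases max_choice (dualSup (H n) x) (dualSup (H n) (-x)) with h | h
  · exact exists_apply_eq_one_of_dualSup_eq hH0 ha hF (ha_pos n) (hrel n) hx (h ▸ hmax)
  · obtain ⟨f, hf, hf1⟩ := exists_apply_eq_one_of_dualSup_eq hH0 ha hF (ha_pos n) (hrel n)
      ((dualSup_neg (fun _ => neg_mem_weightedLayers) x).trans hx) (h ▸ hmax)
    exact ⟨-f, neg_mem_weightedLayers hf, by simpa using hf1⟩

lemma propertyStar_weightedLayers (hH0 : H 0 = ∅) (ha : Antitone a) (ha_pos : ∀ n, 0 < a n)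
    (ha_lim : Tendsto a atTop (𝓝 1)) (hball : ∀ n, H n ⊆ {f | ‖f‖ ≤ 1})
    (hstar : ∀ n, PropertyStar (H n)) {A : ℝ} (hF : ∀ f ∈ weightedLayers a H, ‖f‖ ≤ A)
    (hnorm : ∀ x ≠ 0, ‖x‖ < dualSup (weightedLayers a H) x) :
    PropertyStar (weightedLayers a H) := by
  intro g hg x hx
  obtain ⟨N, hN⟩ := exists_mul_norm_lt_one hnorm ha_lim hx
  by_contra! hgx
  -- near `g`, only the finitely many layers `n < N` can exceed `a N * ‖x‖` at `x`
  set V : Set (WeakDual ℝ X) := {ψ | a N * ‖x‖ < ψ x}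
  have hsub : weightedLayers a H ∩ StrongDual.toWeakDual ⁻¹' V ⊆
      ⋃ n ∈ Finset.range N, weightedLayer a H n := by
    rintro f ⟨hf, hfx⟩
    obtain ⟨n, hn⟩ := mem_iUnion.1 hf
    refine mem_iUnion₂.2 ⟨n, Finset.mem_range.2 (lt_of_not_ge fun hNn => ?_), hn⟩
    refine (show a N * ‖x‖ < f x from hfx).not_ge ?_
    exact (f.apply_le_of_opNorm_le (norm_le_of_mem_weightedLayer hball (ha_pos n).le hn) x).trans
      (mul_le_mul_of_nonneg_right (ha hNn) (norm_nonneg x))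
  obtain ⟨n, -, hn⟩ := ((hg.inter_preimage (isOpen_lt continuous_const (WeakDual.eval_continuous x))
    (show a N * ‖x‖ < g x by linarith)).mono hsub).exists_of_biUnion
  have hHn : ∀ h ∈ H n, ∀ y ∈ ({a n • x, -(a n • x)} : Set X), h y ≤ 1 := by
    intro h hh
    have hle := (mul_abs_apply_le_dualSup hH0 ha hF hh x).trans hx.le
    rintro y (rfl | rfl)
    · rw [map_smul, smul_eq_mul]
      exact (mul_le_mul_of_nonneg_left (le_abs_self _) (ha_pos n).le).trans hle
    · rw [map_neg, map_smul, smul_eq_mul, ← mul_neg]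
      exact (mul_le_mul_of_nonneg_left (neg_le_abs _) (ha_pos n).le).trans hle
  rcases (hn.of_smul (ha_pos n).ne').union with h | h
  · have := (hstar n).apply_lt_one (hball n) (h.mono sdiff_subset) (hHn · · _ (Or.inl rfl))
    simp [(ha_pos n).ne'] at this
    linarith
  · have h' := h.neg
    rw [neg_neg] at h'
    have := (hstar n).apply_lt_one (hball n) (h'.mono sdiff_subset) (hHn · · _ (Or.inr rfl))
    simp [(ha_pos n).ne'] at this
    linarith

lemma norm_lt_dualSup_weightedLayers (hH0 : H 0 = ∅) (ha : Antitone a) (ha_pos : ∀ n, 0 < a n)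
    {A : ℝ} (hF : ∀ f ∈ weightedLayers a H, ‖f‖ ≤ A)
    (hsph : ∀ y ∈ Metric.sphere (0 : X) 1, ∃ n, 1 < a n * dualSup (H n) y) {x : X} (hx : x ≠ 0) :
    ‖x‖ < dualSup (weightedLayers a H) x := by
  obtain ⟨n, hn⟩ := hsph (‖x‖⁻¹ • x) (by simp [norm_smul, hx])
  have := hn.trans_le (mul_dualSup_le_dualSup hH0 ha hF (ha_pos n).le _)
  rwa [dualSup_smul (inv_nonneg.2 (norm_nonneg x)), lt_inv_mul_iff₀ (norm_pos_iff.2 hx),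
    mul_one] at this


end weightedLayers

lemma exists_one_lt_mul_dualSup {S : ℕ → Set X} {H : ℕ → Set (StrongDual ℝ X)} {a b : ℕ → ℝ}
    (hcover : Metric.sphere (0 : X) 1 = ⋃ (n : ℕ) (_ : 1 ≤ n), S n)
    (hb : ∀ n, 1 ≤ n →
      b n = sInf ((fun x : X => sSup ((fun h : StrongDual ℝ X => h x) '' H n)) '' S n))
    (hbpos : ∀ n, 1 ≤ n → 0 < b n) (hab : ∀ n, 1 ≤ n → 1 < a n * b n) (ha_pos : ∀ n, 0 < a n)
    {y : X} (hy : y ∈ Metric.sphere (0 : X) 1) : ∃ n, 1 < a n * dualSup (H n) y := by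
  rw [hcover] at hy
  obtain ⟨m, hm, hyS⟩ := by simpa using hy
  have hbm : b m ≤ dualSup (H m) y :=
    hb m hm ▸ sInf_le_of_sInf_pos (hb m hm ▸ hbpos m hm) (mem_image_of_mem _ hyS)
  exact ⟨m, (hab m hm).trans_le (mul_le_mul_of_nonneg_left hbm (ha_pos m).le)⟩

end

theorem stmt2 {X : Type*} [NormedAddCommGroup X] [NormedSpace ℝ X]
    (S : ℕ → Set X) (H : ℕ → Set (StrongDual ℝ X)) (b : ℕ → ℝ)
    (hcover : Metric.sphere (0 : X) 1 = ⋃ (n : ℕ) (_ : 1 ≤ n), S n)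
    (hH0 : H 0 = ∅)
    (hball : ∀ n, H n ⊆ {f : StrongDual ℝ X | ‖f‖ ≤ 1})
    (hrel : ∀ n, IsRelativeBoundary (H n))
    (hb : ∀ n, 1 ≤ n →
      b n = sInf ((fun x : X => sSup ((fun h : StrongDual ℝ X => h x) '' H n)) '' S n))
    (hbpos : ∀ n, 1 ≤ n → 0 < b n)
    (hblim : Tendsto b atTop (𝓝 1)) :
    ∃ (a : ℕ → ℝ) (ν : Seminorm ℝ X), (∀ n, 1 ≤ n → 1 < a n) ∧ IsEquivNorm ν ∧
      IsBoundaryFor (fun x => ν x)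
        (⋃ n, a n • ((H n \ H (n - 1)) ∪ -(H n \ H (n - 1))) : Set (StrongDual ℝ X)) ∧
      ((∀ n, PropertyStar (H n)) →
        PropertyStar (⋃ n, a n • ((H n \ H (n - 1)) ∪ -(H n \ H (n - 1))) : Set (StrongDual ℝ X)) ∧
        IsPolyhedralNorm (fun x => ν x)) := by
  obtain ⟨a, ha, hba, ha_lim⟩ := exists_strictAnti_gt_tendsto
    (by simpa using (tendsto_const_nhds (x := (1 : ℝ))).max (hblim.inv₀ one_ne_zero) :
      Tendsto (fun n => max 1 (b n)⁻¹) atTop (𝓝 1))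
  have ha1 n : 1 < a n := (ha.antitone.le_of_tendsto ha_lim (n + 1)).trans_lt (ha n.lt_succ_self)
  have ha_pos n : 0 < a n := one_pos.trans (ha1 n)
  have hab n (hn : 1 ≤ n) : 1 < a n * b n :=
    (inv_lt_iff_one_lt_mul₀ (hbpos n hn)).1 ((le_max_right _ _).trans_lt (hba n))
  have hF : ∀ f ∈ weightedLayers a H, ‖f‖ ≤ a 0 := fun f =>
    norm_le_of_mem_weightedLayers hball ha.antitone fun n => (ha_pos n).le
  obtain ⟨ν, hν⟩ := exists_seminorm_eq_dualSup (fun _ => neg_mem_weightedLayers) hF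
  have hnorm : ∀ x ≠ 0, ‖x‖ < dualSup (weightedLayers a H) x := fun x =>
    norm_lt_dualSup_weightedLayers hH0 ha.antitone ha_pos hF fun y =>
      exists_one_lt_mul_dualSup hcover hb hbpos hab ha_pos
  have hequiv : IsEquivNorm ν := by
    refine ⟨1, a 0, one_pos, fun x => ⟨?_, ?_⟩⟩ <;> rw [hν]
    · rcases eq_or_ne x 0 with rfl | hx
      · simp [dualSup_zero]
      · rw [one_mul]; exact (hnorm x hx).le
    · exact dualSup_le (mul_nonneg (ha_pos 0).le (norm_nonneg x)) fun f hf =>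
        f.apply_le_of_opNorm_le (hF f hf) x
  have hbound : IsBoundaryFor ν (weightedLayers a H) := hν ▸
    isBoundaryFor_weightedLayers hH0 ha ha_pos ha_lim hball hrel hF hnorm
  refine ⟨a, ν, fun n _ => ha1 n, hequiv, hbound, fun hstar => ?_⟩
  have hstarF := propertyStar_weightedLayers hH0 ha.antitone ha_pos ha_lim hball hstar hF hnorm
  exact ⟨hstarF, hstarF.isPolyhedralNorm hF hequiv hν hbound⟩

end
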